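/- arXiv:2208.13216 — 3 statements merged into one kernel-verified Lean document; each statement's English description precedes it below -/
import Mathlib

section
/- Among all connected bipartite graphs on n vertices, exactly the complete bipartite graphs K_{a,b} (a+b=n) attain the maximum reciprocal distance Laplacian spectral radius, which equals n. That is, if G is connected bipartite on n vertices, then ρ(RD^L(G)) ≤ n with equality if and only if G ≅ K_{a,b} for some a,b with a+b=n. -/
open Matrix Polynomial

/-- The reciprocal distance (Harary) matrix of a graph: `(i,j)`-entry is `1/d(i,j)`
for `i ≠ j` and `0` on the diagonal. -/
noncomputable def RD {V : Type*} [Fintype V] [DecidableEq V] (G : SimpleGraph V) :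
    Matrix V V ℝ :=
  fun u v => if u = v then 0 else ((G.dist u v : ℝ))⁻¹

/-- The reciprocal distance degree of a vertex: `RTr(v) = ∑_{u ≠ v} 1/d(v,u)`. -/
noncomputable def RTr {V : Type*} [Fintype V] [DecidableEq V] (G : SimpleGraph V) (v : V) : ℝ :=
  ∑ u, RD G v u

/-- The reciprocal distance Laplacian matrix `RD^L(G) = RT(G) - RD(G)`. -/
noncomputable def RDL {V : Type*} [Fintype V] [DecidableEq V] (G : SimpleGraph V) :
    Matrix V V ℝ :=
  Matrix.diagonal (RTr G) - RD G

/-- `e : Fin n → ℝ` enumerates the eigenvalues of `M` in (weakly) decreasing order,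
with multiplicities, where the eigenvalues (with multiplicity) are the roots of the
characteristic polynomial. -/
def IsEigEnum {V : Type*} [Fintype V] [DecidableEq V] (M : Matrix V V ℝ)
    (e : Fin (Fintype.card V) → ℝ) : Prop :=
  Antitone e ∧ (↑(List.ofFn e) : Multiset ℝ) = M.charpoly.roots


/-- The spectral radius (largest eigenvalue) of a real symmetric matrix, as the
supremum of the roots of its characteristic polynomial. -/
noncomputable def specRad {V : Type*} [Fintype V] [DecidableEq V] (M : Matrix V V ℝ) : ℝ :=
  sSup {x : ℝ | x ∈ M.charpoly.roots}

/-! The reciprocal distance matrix `RD G` is symmetric with entries at most `1`, equal to `1`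
exactly on edges, so `RDL G` is the Laplacian `L` of a weight matrix `W` with `W ≤ 1`. For an
eigenvector `L x = μ x` with `μ ≠ 0` we have `∑ x = 0`, and then
`∑ u, ∑ v, (1 - W u v) (x u - x v)² = 2 (n - μ) ‖x‖²`, whence `μ ≤ n`. If `μ = n`, then `x` is
constant on every non-adjacent pair; as `x` is not constant, a 2-colouring of `G` must then make
every pair of differently coloured vertices adjacent, i.e. `G` is complete bipartite. Conversely,
for `K_{a,b}` the vector equal to `b` on one side and `-a` on the other is an eigenvector for
`n`. -/

open Finset

section SumSq

variable {V R : Type*} [Fintype V] [CommRing R] {W : Matrix V V R}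

theorem Matrix.IsSymm.sum_sum_mul_swap (hW : W.IsSymm) (f : V → V → R) :
    ∑ u, ∑ v, W u v * f v u = ∑ u, ∑ v, W u v * f u v := by
  rw [sum_comm]
  simp only [hW.apply]

theorem sum_sum_sub_sq (x : V → R) :
    ∑ u, ∑ v, (x u - x v) ^ 2 = 2 * (Fintype.card V * ∑ u, x u ^ 2 - (∑ u, x u) ^ 2) := by
  simp only [sub_sq, sum_add_distrib, sum_sub_distrib, sum_const, card_univ, nsmul_eq_mul,
    ← mul_sum, ← sum_mul]
  ring

end SumSq

section Charpoly

variable {K n : Type*} [Field K] [Fintype n] [DecidableEq n]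

theorem mem_roots_charpoly_iff {M : Matrix n n K} {μ : K} :
    μ ∈ M.charpoly.roots ↔ ∃ x ≠ 0, M *ᵥ x = μ • x := by
  rw [mem_roots M.charpoly_monic.ne_zero, ← Matrix.charpoly_toLin',
    ← Module.End.hasEigenvalue_iff_isRoot_charpoly]
  constructor
  · intro h
    obtain ⟨x, hx⟩ := h.exists_hasEigenvector
    exact ⟨x, hx.2, Module.End.mem_eigenspace_iff.mp hx.1⟩
  · rintro ⟨x, hx0, hx⟩
    exact Module.End.hasEigenvalue_of_hasEigenvector ⟨Module.End.mem_eigenspace_iff.mpr hx, hx0⟩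

end Charpoly

theorem exists_ne_of_sum_eq_zero {K n : Type*} [Field K] [CharZero K] [Fintype n] {x : n → K}
    (hx0 : x ≠ 0) (hsum : ∑ u, x u = 0) : ∃ u v, x u ≠ x v := by
  by_contra! hconst
  obtain ⟨u, hu⟩ := Function.ne_iff.mp hx0
  have : ∑ v, x v = Fintype.card n * x u := by
    rw [sum_congr rfl fun v _ => hconst v u, sum_const, card_univ, nsmul_eq_mul]
  rw [hsum, eq_comm, mul_eq_zero, Nat.cast_eq_zero, Fintype.card_eq_zero_iff] at this
  exact this.elim (fun h => h.elim u) hu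

section SpecRad

variable {V : Type*} [Fintype V] [DecidableEq V] {M : Matrix V V ℝ}

theorem finite_setOf_mem_roots_charpoly (M : Matrix V V ℝ) :
    {x : ℝ | x ∈ M.charpoly.roots}.Finite :=
  M.charpoly.roots.finite_toSet

theorem le_specRad {μ : ℝ} (hμ : μ ∈ M.charpoly.roots) : μ ≤ specRad M :=
  le_csSup (finite_setOf_mem_roots_charpoly M).bddAbove hμ

theorem specRad_le {c : ℝ} (h : ∀ μ ∈ M.charpoly.roots, μ ≤ c) (hc : 0 ≤ c) :
    specRad M ≤ c :=
  Real.sSup_le h hc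

theorem specRad_mem_roots (h : specRad M ≠ 0) : specRad M ∈ M.charpoly.roots := by
  refine Set.Nonempty.csSup_mem ?_ (finite_setOf_mem_roots_charpoly M)
  by_contra hempty
  rw [Set.not_nonempty_iff_eq_empty] at hempty
  exact h (by rw [specRad, hempty, Real.sSup_empty])

end SpecRad

section WeightedLaplacian

variable {V R : Type*} [Fintype V] [DecidableEq V]

def weightedLaplacian [CommRing R] (W : Matrix V V R) : Matrix V V R :=
  diagonal (fun u => ∑ v, W u v) - W

section CommRing

variable [CommRing R] {W : Matrix V V R}

theorem weightedLaplacian_mulVec_apply (W : Matrix V V R) (x : V → R) (u : V) :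
    (weightedLaplacian W *ᵥ x) u = ∑ v, W u v * (x u - x v) := by
  rw [weightedLaplacian, sub_mulVec, Pi.sub_apply, mulVec_diagonal, sum_mul]
  simp only [mulVec, dotProduct, mul_sub, sum_sub_distrib]

theorem sum_weightedLaplacian_mulVec (hW : W.IsSymm) (x : V → R) :
    ∑ u, (weightedLaplacian W *ᵥ x) u = 0 := by
  simp only [weightedLaplacian_mulVec_apply, mul_sub, sum_sub_distrib]
  rw [hW.sum_sum_mul_swap fun u _ => x u, sub_self]

theorem two_mul_dotProduct_weightedLaplacian_mulVec (hW : W.IsSymm) (x : V → R) :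
    2 * (x ⬝ᵥ weightedLaplacian W *ᵥ x) = ∑ u, ∑ v, W u v * (x u - x v) ^ 2 := by
  have h : x ⬝ᵥ weightedLaplacian W *ᵥ x = ∑ u, ∑ v, W u v * (x u * (x u - x v)) := by
    simp only [dotProduct, weightedLaplacian_mulVec_apply, mul_sum]
    exact sum_congr rfl fun u _ => sum_congr rfl fun v _ => by ring
  rw [two_mul]
  nth_rw 2 [h]
  rw [← hW.sum_sum_mul_swap, h, ← sum_add_distrib]
  exact sum_congr rfl fun u _ => by rw [← sum_add_distrib]; exact sum_congr rfl fun v _ => by ring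

theorem exists_weightedLaplacian_mulVec_eq_card_smul [CharZero R] (p : V → Prop)
    [DecidablePred p] (hW : ∀ u v, (p u ↔ ¬p v) → W u v = 1) {u₀ v₀ : V} (hu₀ : p u₀)
    (hv₀ : ¬p v₀) : ∃ x ≠ 0, weightedLaplacian W *ᵥ x = (Fintype.card V : R) • x := by
  have hcard : (#{v | p v} : R) + #{v | ¬p v} = Fintype.card V := by
    rw [← Nat.cast_add, card_filter_add_card_filter_not, card_univ]
  set x : V → R := fun v => if p v then (#{v | ¬p v} : R) else -#{v | p v}
  refine ⟨x, fun h => ?_, ?_⟩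
  · have hx₀ : x u₀ = #{v | ¬p v} := if_pos hu₀
    rw [h, Pi.zero_apply, eq_comm, Nat.cast_eq_zero, card_eq_zero, filter_eq_empty_iff] at hx₀
    exact hx₀ (mem_univ v₀) hv₀
  ext u
  rw [weightedLaplacian_mulVec_apply, Pi.smul_apply, smul_eq_mul]
  by_cases hu : p u
  · have hterm : ∀ v, W u v * (x u - x v) = if p v then 0 else (Fintype.card V : R) := by
      intro v
      by_cases hv : p v
      · simp [x, hu, hv]
      · simp [x, hu, hv, hW u v (iff_of_true hu hv), ← hcard, add_comm]
    rw [sum_congr rfl fun v _ => hterm v]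
    simp [sum_ite, x, hu, mul_comm]
  · have hterm : ∀ v, W u v * (x u - x v) = if p v then -(Fintype.card V : R) else 0 := by
      intro v
      by_cases hv : p v
      · simp [x, hu, hv, hW u v (iff_of_false hu (not_not.mpr hv)), ← hcard]; ring
      · simp [x, hu, hv]
    rw [sum_congr rfl fun v _ => hterm v]
    simp [sum_ite, x, hu, mul_comm]

end CommRing

section Field

variable {K : Type*} [Field K] {W : Matrix V V K} {x : V → K} {μ : K}

theorem sum_eq_zero_of_weightedLaplacian_mulVec_eq_smul (hW : W.IsSymm) (hμ : μ ≠ 0)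
    (hx : weightedLaplacian W *ᵥ x = μ • x) : ∑ u, x u = 0 := by
  have h := sum_weightedLaplacian_mulVec hW x
  simp only [hx, Pi.smul_apply, smul_eq_mul, ← mul_sum] at h
  exact (mul_eq_zero.mp h).resolve_left hμ

theorem sum_sum_one_sub_mul_sub_sq_of_weightedLaplacian_mulVec_eq_smul (hW : W.IsSymm)
    (hμ : μ ≠ 0) (hx : weightedLaplacian W *ᵥ x = μ • x) :
    ∑ u, ∑ v, (1 - W u v) * (x u - x v) ^ 2 = 2 * ((Fintype.card V - μ) * (x ⬝ᵥ x)) := by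
  simp only [sub_mul, one_mul, sum_sub_distrib]
  rw [sum_sum_sub_sq, ← two_mul_dotProduct_weightedLaplacian_mulVec hW, hx, dotProduct_smul,
    sum_eq_zero_of_weightedLaplacian_mulVec_eq_smul hW hμ hx]
  simp only [dotProduct, sq, smul_eq_mul]
  ring

variable [LinearOrder K] [IsStrictOrderedRing K]

theorem le_card_of_weightedLaplacian_mulVec_eq_smul (hW : W.IsSymm) (hW1 : ∀ u v, W u v ≤ 1)
    (hx0 : x ≠ 0) (hx : weightedLaplacian W *ᵥ x = μ • x) : μ ≤ Fintype.card V := by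
  rcases le_or_gt μ 0 with hμ | hμ
  · exact hμ.trans (Nat.cast_nonneg _)
  have hid := sum_sum_one_sub_mul_sub_sq_of_weightedLaplacian_mulVec_eq_smul hW hμ.ne' hx
  have hnonneg : 0 ≤ ∑ u, ∑ v, (1 - W u v) * (x u - x v) ^ 2 :=
    sum_nonneg fun u _ => sum_nonneg fun v _ => mul_nonneg (sub_nonneg.mpr (hW1 u v)) (sq_nonneg _)
  have hxx : 0 < x ⬝ᵥ x :=
    lt_of_le_of_ne (sum_nonneg fun u _ => mul_self_nonneg (x u))
      (Ne.symm (dotProduct_self_eq_zero.not.mpr hx0))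
  nlinarith

theorem eq_of_weightedLaplacian_mulVec_eq_card_smul [Nonempty V] (hW : W.IsSymm)
    (hW1 : ∀ u v, W u v ≤ 1) (hx : weightedLaplacian W *ᵥ x = (Fintype.card V : K) • x)
    {u v : V} (huv : W u v < 1) : x u = x v := by
  have hid := sum_sum_one_sub_mul_sub_sq_of_weightedLaplacian_mulVec_eq_smul hW
    (Nat.cast_ne_zero.mpr Fintype.card_ne_zero) hx
  rw [sub_self, zero_mul, mul_zero] at hid
  have hterm : ∀ u v, 0 ≤ (1 - W u v) * (x u - x v) ^ 2 := fun u v =>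
    mul_nonneg (sub_nonneg.mpr (hW1 u v)) (sq_nonneg _)
  have huv0 : (1 - W u v) * (x u - x v) ^ 2 = 0 :=
    (sum_eq_zero_iff_of_nonneg fun v _ => hterm u v).mp
      ((sum_eq_zero_iff_of_nonneg fun u _ => sum_nonneg fun v _ => hterm u v).mp hid u
        (mem_univ u)) v (mem_univ v)
  have := (mul_eq_zero.mp huv0).resolve_left (sub_ne_zero.mpr huv.ne')
  exact sub_eq_zero.mp (pow_eq_zero_iff two_ne_zero |>.mp this)

end Field

end WeightedLaplacian

namespace SimpleGraph

variable {V : Type*} {G : SimpleGraph V}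

theorem exists_adj_iff_of_colorable_two {α : Type*} {x : V → α} (hb : G.Colorable 2)
    (hflat : ∀ u v, ¬G.Adj u v → x u = x v) (hx : ∃ u v, x u ≠ x v) :
    ∃ p : V → Prop, ∀ u v, G.Adj u v ↔ (p u ↔ ¬p v) := by
  obtain ⟨C⟩ := hb
  refine ⟨fun v => C v = 0, fun u v => ⟨fun h => by have := C.valid h; omega, fun h => ?_⟩⟩
  have hne : C u ≠ C v := by omega
  by_contra hnadj
  have hconst : ∀ w, x w = x u := by
    intro w
    have hw : C w = C u ∨ C w = C v := by omega
    rcases hw with hw | hw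
    · exact hflat w u fun hadj => C.valid hadj hw
    · exact (hflat w v fun hadj => C.valid hadj hw).trans (hflat u v hnadj).symm
  obtain ⟨w₁, w₂, hw⟩ := hx
  exact hw ((hconst w₁).trans (hconst w₂).symm)

theorem exists_iso_completeBipartiteGraph [Fintype V] (p : V → Prop)
    (h : ∀ u v, G.Adj u v ↔ (p u ↔ ¬p v)) :
    ∃ a b : ℕ, a + b = Fintype.card V ∧
      Nonempty (G ≃g completeBipartiteGraph (Fin a) (Fin b)) := by
  classical
  let ψ : completeBipartiteGraph {v // p v} {v // ¬p v} ≃g G :=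
    { Equiv.sumCompl p with
      map_rel_iff' := by
        rintro (⟨u, hu⟩ | ⟨u, hu⟩) (⟨v, hv⟩ | ⟨v, hv⟩) <;> simp [h, hu, hv] }
  exact ⟨_, _, by rw [← Fintype.card_sum, Fintype.card_congr (Equiv.sumCompl p)],
    ⟨ψ.symm.trans (completeBipartiteGraphCongr (Fintype.equivFin _) (Fintype.equivFin _))⟩⟩

theorem Iso.adj_iff_isLeft {α β : Type*} (φ : G ≃g completeBipartiteGraph α β) (u v : V) :
    G.Adj u v ↔ ((φ u).isLeft ↔ ¬(φ v).isLeft) := by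
  rw [← φ.map_adj_iff]
  rcases φ u with _ | _ <;> rcases φ v with _ | _ <;> simp

end SimpleGraph

section ReciprocalDistance

variable {V : Type*} [Fintype V] [DecidableEq V] {G : SimpleGraph V} {u v : V}

theorem RDL_eq_weightedLaplacian (G : SimpleGraph V) : RDL G = weightedLaplacian (RD G) := rfl

theorem RD_isSymm (G : SimpleGraph V) : (RD G).IsSymm :=
  IsSymm.ext fun u v => by simp only [RD, eq_comm, G.dist_comm]

theorem RD_le_one (G : SimpleGraph V) (u v : V) : RD G u v ≤ 1 := by
  unfold RD
  split_ifs
  exacts [zero_le_one, Nat.cast_inv_le_one _]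

theorem RD_eq_one_of_adj (h : G.Adj u v) : RD G u v = 1 := by
  simp [RD, h.ne, SimpleGraph.dist_eq_one_iff_adj.mpr h]

theorem RD_lt_one_of_not_adj (h : ¬G.Adj u v) : RD G u v < 1 := by
  have hd : G.dist u v ≠ 1 := fun hd => h (SimpleGraph.dist_eq_one_iff_adj.mp hd)
  unfold RD
  split_ifs
  · exact zero_lt_one
  rcases Nat.lt_or_gt_of_ne hd with hd | hd
  · simp [Nat.lt_one_iff.mp hd]
  · exact inv_lt_one_of_one_lt₀ (by exact_mod_cast hd)

theorem le_card_of_mem_roots_charpoly_RDL {μ : ℝ} (hμ : μ ∈ (RDL G).charpoly.roots) :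
    μ ≤ Fintype.card V := by
  rw [RDL_eq_weightedLaplacian] at hμ
  obtain ⟨x, hx0, hx⟩ := mem_roots_charpoly_iff.mp hμ
  exact le_card_of_weightedLaplacian_mulVec_eq_smul (RD_isSymm G) (RD_le_one G) hx0 hx

theorem exists_iso_completeBipartiteGraph_of_card_mem_roots_charpoly_RDL (hb : G.Colorable 2)
    (h : (Fintype.card V : ℝ) ∈ (RDL G).charpoly.roots) :
    ∃ a b : ℕ, a + b = Fintype.card V ∧
      Nonempty (G ≃g completeBipartiteGraph (Fin a) (Fin b)) := by
  rw [RDL_eq_weightedLaplacian] at h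
  obtain ⟨x, hx0, hx⟩ := mem_roots_charpoly_iff.mp h
  have : Nonempty V := ⟨(Function.ne_iff.mp hx0).choose⟩
  have hflat (u v : V) (h : ¬G.Adj u v) : x u = x v :=
    eq_of_weightedLaplacian_mulVec_eq_card_smul (RD_isSymm G) (RD_le_one G) hx
      (RD_lt_one_of_not_adj h)
  have hsum := sum_eq_zero_of_weightedLaplacian_mulVec_eq_smul (RD_isSymm G)
    (Nat.cast_ne_zero.mpr Fintype.card_ne_zero) hx
  obtain ⟨p, hp⟩ :=
    G.exists_adj_iff_of_colorable_two hb hflat (exists_ne_of_sum_eq_zero hx0 hsum)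
  exact G.exists_iso_completeBipartiteGraph p hp

theorem card_mem_roots_charpoly_RDL_of_adj_iff (p : V → Prop)
    (hp : ∀ u v, G.Adj u v ↔ (p u ↔ ¬p v)) (huv : G.Adj u v) :
    (Fintype.card V : ℝ) ∈ (RDL G).charpoly.roots := by
  classical
  have hW (w w' : V) (h : p w ↔ ¬p w') : RD G w w' = 1 := RD_eq_one_of_adj ((hp w w').mpr h)
  have hside := (hp u v).mp huv
  rw [RDL_eq_weightedLaplacian, mem_roots_charpoly_iff]
  by_cases hu : p u
  · exact exists_weightedLaplacian_mulVec_eq_card_smul p hW hu (hside.mp hu)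
  · exact exists_weightedLaplacian_mulVec_eq_card_smul p hW (not_not.mp (hside.not.mp hu)) hu

end ReciprocalDistance

theorem stmt7 {V : Type*} [Fintype V] [DecidableEq V] (G : SimpleGraph V)
    (hc : G.Connected) (hn : 2 ≤ Fintype.card V) (hb : G.Colorable 2) :
    specRad (RDL G) ≤ (Fintype.card V : ℝ) ∧
      (specRad (RDL G) = (Fintype.card V : ℝ) ↔
        ∃ a b : ℕ, a + b = Fintype.card V ∧
          Nonempty (G ≃g completeBipartiteGraph (Fin a) (Fin b))) := by
  have hle : specRad (RDL G) ≤ Fintype.card V :=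
    specRad_le (fun _ => le_card_of_mem_roots_charpoly_RDL) (Nat.cast_nonneg _)
  refine ⟨hle, fun heq => ?_, fun ⟨_, _, _, ⟨φ⟩⟩ => ?_⟩
  · apply exists_iso_completeBipartiteGraph_of_card_mem_roots_charpoly_RDL hb
    rw [← heq]
    exact specRad_mem_roots (by rw [heq]; exact Nat.cast_ne_zero.mpr (by omega))
  · have : Nontrivial V := Fintype.one_lt_card_iff_nontrivial.mp hn
    obtain ⟨v, huv⟩ := hc.preconnected.exists_adj_of_nontrivial (Classical.arbitrary V)
    exact le_antisymm hle
      (le_specRad (card_mem_roots_charpoly_RDL_of_adj_iff _ φ.adj_iff_isLeft huv))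
end

section
/- Let G be a connected graph on n ≥ 2 vertices and S = {v_1,...,v_r} a clique of G such that N_G(v_i) \ S = N_G(v_j) \ S for all 1 ≤ i,j ≤ r. Then all vertices of S have the same reciprocal distance degree T, and T + 1 is an eigenvalue of RD^L(G) with multiplicity at least r − 1. -/
open Matrix Polynomial

/-
Vertices of `S` are twins: a shortest walk leaving `S` can be rerouted to start at any vertex
of `S`, so all of them are at the same distance from each vertex outside `S`, and at distance 1
from each other. Hence the transposition of two vertices `u, v ∈ S` carries the row of `u` in
the reciprocal distance matrix to that of `v`, which makes the reciprocal distance degrees equal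
to a common `T` and shows that `e_u - e_v` is an eigenvector of `RD^L(G)` for `T + 1`. Fixing
`u`, these `|S| - 1` vectors are linearly independent, and the geometric multiplicity of an
eigenvalue bounds its algebraic one.
-/

theorem Matrix.card_le_count_roots_charpoly {K n ι : Type*} [Field K] [DecidableEq K]
    [Fintype n] [DecidableEq n] [Fintype ι] (A : Matrix n n K) {μ : K} {v : ι → n → K}
    (hv : LinearIndependent K v) (hev : ∀ i, A *ᵥ v i = μ • v i) :
    Fintype.card ι ≤ A.charpoly.roots.count μ := by
  let E := Module.End.eigenspace (toLin' A) μ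
  have hmem : ∀ i, v i ∈ E := fun i =>
    Module.End.mem_eigenspace_iff.2 (by rw [toLin'_apply, hev i])
  have hvE : LinearIndependent K fun i => (⟨v i, hmem i⟩ : E) := .of_comp E.subtype hv
  calc Fintype.card ι ≤ Module.finrank K E := hvE.fintype_card_le_finrank
    _ ≤ (toLin' A).charpoly.rootMultiplicity μ := LinearMap.finrank_eigenspace_le _ _
    _ = A.charpoly.roots.count μ := by rw [charpoly_toLin', count_roots]

theorem Matrix.mulVec_single_sub_single {R n : Type*} [CommRing R] [Fintype n] [DecidableEq n]
    (M : Matrix n n R) {u v : n} (huv : u ≠ v) {μ : R} (hu : M u u - M u v = μ)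
    (hv : M v v - M v u = μ) (hcol : ∀ w, w ≠ u → w ≠ v → M w u = M w v) :
    M *ᵥ (Pi.single u 1 - Pi.single v 1) = μ • (Pi.single u 1 - Pi.single v 1) := by
  ext w
  simp only [mulVec_sub, mulVec_single_one, Pi.sub_apply, Pi.smul_apply, col_apply,
    Pi.single_apply, smul_eq_mul]
  by_cases hwu : w = u
  · subst hwu; simp [huv, hu]
  by_cases hwv : w = v
  · subst hwv; simp [hwu, ← hv]
  · simp [hwu, hwv, hcol w hwu hwv]

theorem linearIndependent_single_sub_single {K n : Type*} [Field K] [DecidableEq n]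
    (s : Finset n) (u : n) :
    LinearIndependent K fun v : s.erase u => (Pi.single u 1 - Pi.single (v : n) 1 : n → K) := by
  rw [Fintype.linearIndependent_iff]
  intro c hc v
  have hv : (v : n) ≠ u := (Finset.mem_erase.1 v.2).1
  simpa [Finset.sum_apply, Pi.single_apply, hv, Subtype.val_inj, eq_comm] using congrFun hc v

namespace SimpleGraph

variable {V : Type*} {G : SimpleGraph V} {S : Finset V}

theorem exists_walk_length_le_of_neighborSet_diff_eq
    (hnbr : ∀ u ∈ S, ∀ w ∈ S, G.neighborSet u \ (S : Set V) = G.neighborSet w \ (S : Set V))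
    {u v w : V} (hu : u ∈ S) (p : G.Walk v w) (hv : v ∈ S) (hw : w ∉ S) :
    ∃ q : G.Walk u w, q.length ≤ p.length := by
  induction p with
  | nil => exact absurd hv hw
  | @cons v x w hvx p ih =>
    by_cases hx : x ∈ S
    · obtain ⟨q, hq⟩ := ih hx hw
      exact ⟨q, hq.trans (by simp)⟩
    · have hux : x ∈ G.neighborSet u \ (S : Set V) := hnbr v hv u hu ▸ ⟨hvx, hx⟩
      exact ⟨.cons hux.1 p, (Walk.length_cons _ _).le⟩

theorem reachable_and_dist_le_of_neighborSet_diff_eq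
    (hnbr : ∀ u ∈ S, ∀ w ∈ S, G.neighborSet u \ (S : Set V) = G.neighborSet w \ (S : Set V))
    {u v w : V} (hu : u ∈ S) (hv : v ∈ S) (hw : w ∉ S) (hvw : G.Reachable v w) :
    G.Reachable u w ∧ G.dist u w ≤ G.dist v w := by
  obtain ⟨p, hp⟩ := hvw.exists_walk_length_eq_dist
  obtain ⟨q, hq⟩ := exists_walk_length_le_of_neighborSet_diff_eq hnbr hu p hv hw
  exact ⟨⟨q⟩, hp ▸ (dist_le q).trans hq⟩

theorem dist_eq_of_neighborSet_diff_eq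
    (hnbr : ∀ u ∈ S, ∀ w ∈ S, G.neighborSet u \ (S : Set V) = G.neighborSet w \ (S : Set V))
    {u v w : V} (hu : u ∈ S) (hv : v ∈ S) (hw : w ∉ S) :
    G.dist u w = G.dist v w := by
  have key : ∀ {a b}, a ∈ S → b ∈ S → G.Reachable b w →
      G.Reachable a w ∧ G.dist a w ≤ G.dist b w := fun ha hb =>
    reachable_and_dist_le_of_neighborSet_diff_eq hnbr ha hb hw
  -- `G.dist` is `0` between unreachable vertices, so reachability must be transferred too.
  by_cases huw : G.Reachable u w
  · have hvw := (key hv hu huw).1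
    exact le_antisymm (key hu hv hvw).2 (key hv hu huw).2
  · have hvw : ¬G.Reachable v w := fun hvw => huw (key hu hv hvw).1
    rw [dist_eq_zero_of_not_reachable huw, dist_eq_zero_of_not_reachable hvw]

end SimpleGraph

section ReciprocalDistance

variable {V : Type*} [Fintype V] [DecidableEq V] (G : SimpleGraph V)

theorem RD_self (u : V) : RD G u u = 0 := if_pos rfl

theorem RD_comm (u v : V) : RD G u v = RD G v u := by
  simp only [RD, eq_comm (a := u), G.dist_comm]

theorem RD_of_adj {u v : V} (h : G.Adj u v) : RD G u v = 1 := by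
  simp [RD, h.ne, SimpleGraph.dist_eq_one_iff_adj.2 h]

variable {G} {S : Finset V}

theorem RD_swap_apply (hclique : G.IsClique (S : Set V))
    (hnbr : ∀ u ∈ S, ∀ w ∈ S, G.neighborSet u \ (S : Set V) = G.neighborSet w \ (S : Set V))
    {u v : V} (hu : u ∈ S) (hv : v ∈ S) (x : V) :
    RD G u (Equiv.swap u v x) = RD G v x := by
  rcases eq_or_ne x u with rfl | hxu
  · rw [Equiv.swap_apply_left, RD_comm]
  rcases eq_or_ne x v with rfl | hxv
  · rw [Equiv.swap_apply_right, RD_self, RD_self]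
  rw [Equiv.swap_apply_of_ne_of_ne hxu hxv]
  by_cases hx : x ∈ S
  · rw [RD_of_adj G (hclique hu hx hxu.symm), RD_of_adj G (hclique hv hx hxv.symm)]
  · simp only [RD, if_neg hxu.symm, if_neg hxv.symm,
      SimpleGraph.dist_eq_of_neighborSet_diff_eq hnbr hu hv hx]

theorem RTr_eq_of_mem (hclique : G.IsClique (S : Set V))
    (hnbr : ∀ u ∈ S, ∀ w ∈ S, G.neighborSet u \ (S : Set V) = G.neighborSet w \ (S : Set V))
    {u v : V} (hu : u ∈ S) (hv : v ∈ S) : RTr G u = RTr G v := by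
  rw [RTr, ← Equiv.sum_comp (Equiv.swap u v) (RD G u)]
  exact Finset.sum_congr rfl fun x _ => RD_swap_apply hclique hnbr hu hv x

theorem RDL_mulVec_single_sub_single (hclique : G.IsClique (S : Set V))
    (hnbr : ∀ u ∈ S, ∀ w ∈ S, G.neighborSet u \ (S : Set V) = G.neighborSet w \ (S : Set V))
    {u v : V} (hu : u ∈ S) (hv : v ∈ S) (huv : u ≠ v) :
    RDL G *ᵥ (Pi.single u 1 - Pi.single v 1)
      = (RTr G u + 1) • (Pi.single u 1 - Pi.single v 1) := by
  have hadj := hclique hu hv huv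
  refine (RDL G).mulVec_single_sub_single huv ?_ ?_ fun w hwu hwv => ?_
  · simp [RDL, huv, RD_self, RD_of_adj G hadj]
  · simp [RDL, huv.symm, RD_self, RD_of_adj G hadj.symm, RTr_eq_of_mem hclique hnbr hu hv]
  · have h := RD_swap_apply hclique hnbr hu hv w
    rw [Equiv.swap_apply_of_ne_of_ne hwu hwv, RD_comm, RD_comm G v] at h
    simp [RDL, hwu, hwv, h]

end ReciprocalDistance

theorem stmt10_general {V : Type*} [Fintype V] [DecidableEq V] (G : SimpleGraph V)
    (S : Finset V) (hclique : G.IsClique (S : Set V))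
    (hnbr : ∀ u ∈ S, ∀ w ∈ S, G.neighborSet u \ (S : Set V) = G.neighborSet w \ (S : Set V)) :
    ∃ T : ℝ, (∀ v ∈ S, RTr G v = T) ∧
      S.card - 1 ≤ Multiset.count (T + 1) (RDL G).charpoly.roots := by
  rcases S.eq_empty_or_nonempty with rfl | ⟨u, hu⟩
  · exact ⟨0, by simp, by simp⟩
  refine ⟨RTr G u, fun v hv => RTr_eq_of_mem hclique hnbr hv hu, ?_⟩
  have hcount := (RDL G).card_le_count_roots_charpoly (linearIndependent_single_sub_single S u)
    fun v => RDL_mulVec_single_sub_single hclique hnbr hu (Finset.mem_of_mem_erase v.2)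
      (Finset.ne_of_mem_erase v.2).symm
  rwa [Fintype.card_coe, Finset.card_erase_of_mem hu] at hcount

theorem stmt10 {V : Type*} [Fintype V] [DecidableEq V] (G : SimpleGraph V)
    (hc : G.Connected) (hn : 2 ≤ Fintype.card V)
    (S : Finset V) (hclique : G.IsClique (S : Set V))
    (hnbr : ∀ u ∈ S, ∀ w ∈ S, G.neighborSet u \ (S : Set V) = G.neighborSet w \ (S : Set V)) :
    ∃ T : ℝ, (∀ v ∈ S, RTr G v = T) ∧
      S.card - 1 ≤ Multiset.count (T + 1) (RDL G).charpoly.roots :=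
  stmt10_general G S hclique hnbr
end

section
/- The reciprocal distance Laplacian spectrum of the complete split graph CS(n,α) is {0, n^{(n−α)}, (n − α/2)^{(α−1)}}. -/
open Matrix Polynomial

/-- The complete split graph `CS(n, α)`: an independent set on the last `α` vertices,
each adjacent to every vertex of a clique on the first `n - α` vertices. -/
def completeSplitGraph (n α : ℕ) : SimpleGraph (Fin n) where
  Adj u v := u ≠ v ∧ ((u : ℕ) < n - α ∨ (v : ℕ) < n - α)
  symm := by
    constructor
    intro u v h
    exact ⟨h.1.symm, h.2.symm⟩
  loopless := by
    constructor
    intro u h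
    exact h.1 rfl

/-!
Write `K` for the clique and `S` for the independent set. Since every distance is `1` except
between two vertices of `S`, where it is `2`,
`(RD^L x) u = ∑ v, (x u - x v) - [u ∈ S] ∑ v ∈ S, (x u - x v) / 2`.
Hence the all-ones vector has eigenvalue `0`, every zero-sum vector that is constant on `S`
has eigenvalue `n` (the differences `e j - e c₀` inside `K`, and `α 𝟙_K - (n - α) 𝟙_S`), and
every zero-sum vector supported on `S` has eigenvalue `n - α / 2` (the differences
`e j - e s₀` inside `S`), for fixed anchors `c₀ ∈ K`, `s₀ ∈ S`. These `n` eigenvectors are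
linearly independent.
-/

open Finset

theorem Matrix.roots_charpoly_of_linearIndependent_eigenvectors {K ι : Type*} [Field K] [Fintype ι]
    [DecidableEq ι] {A : Matrix ι ι K} {v : ι → ι → K} {d : ι → K}
    (hv : LinearIndependent K v) (hAv : ∀ j, A *ᵥ v j = d j • v j) :
    A.charpoly.roots = univ.val.map d := by
  obtain ⟨U, hU⟩ : IsUnit (Matrix.of fun i j => v j i) := linearIndependent_cols_iff_isUnit.mp hv
  have hAU : A * U = U * diagonal d := by
    ext i j
    rw [mul_diagonal, hU, mul_comm]
    simpa [mulVec, dotProduct, Matrix.mul_apply] using congrFun (hAv j) i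
  have hA : A = U * diagonal d * (U : Matrix ι ι K)⁻¹ := by
    rw [← hAU, ← coe_units_inv, mul_assoc, Units.mul_inv, mul_one]
  rw [hA, charpoly_units_conj, charpoly_diagonal, prod_eq_multiset_prod]
  simpa [Multiset.map_map, Function.comp_def] using roots_multiset_prod_X_sub_C (univ.val.map d)

theorem SimpleGraph.dist_eq_two_of_adj_of_adj {V : Type*} {G : SimpleGraph V} {u w v : V}
    (huw : G.Adj u w) (hwv : G.Adj w v) (hne : u ≠ v) (hnadj : ¬ G.Adj u v) :
    G.dist u v = 2 := by
  let p : G.Walk u v := .cons huw (.cons hwv .nil)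
  have hle : G.dist u v ≤ 2 := G.dist_le p
  have hpos : 0 < G.dist u v := p.reachable.pos_dist_of_ne hne
  have hne1 : G.dist u v ≠ 1 := fun h => hnadj (SimpleGraph.dist_eq_one_iff_adj.mp h)
  omega

theorem RDL_mulVec_apply {V : Type*} [Fintype V] [DecidableEq V] (G : SimpleGraph V)
    (x : V → ℝ) (u : V) : (RDL G *ᵥ x) u = ∑ v, RD G u v * (x u - x v) := by
  simp only [RDL, sub_mulVec, Pi.sub_apply, mulVec_diagonal, RTr, sum_mul, mul_sub,
    sum_sub_distrib]
  rfl

theorem RDL_mulVec_one {V : Type*} [Fintype V] [DecidableEq V] (G : SimpleGraph V) :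
    RDL G *ᵥ 1 = 0 := by
  ext u
  simp [RDL_mulVec_apply]

namespace completeSplitGraph

variable {n α : ℕ}

def clique (n α : ℕ) : Finset (Fin n) := {v | (v : ℕ) < n - α}

theorem mem_clique {v : Fin n} : v ∈ clique n α ↔ (v : ℕ) < n - α := by
  simp [clique]

theorem adj_iff {u v : Fin n} :
    (completeSplitGraph n α).Adj u v ↔ u ≠ v ∧ (u ∈ clique n α ∨ v ∈ clique n α) := by
  simp only [mem_clique]; rfl

theorem card_clique (hαn : α ≤ n) : #(clique n α) = n - α := by
  rw [clique, Fin.card_filter_val_lt]; omega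

theorem card_compl_clique (hαn : α ≤ n) : #(clique n α)ᶜ = α := by
  rw [card_compl, Fintype.card_fin, card_clique hαn]; omega

theorem RD_apply (hαn : α < n) (u v : Fin n) :
    RD (completeSplitGraph n α) u v =
      if u = v then 0 else if u ∈ clique n α ∨ v ∈ clique n α then 1 else 1 / 2 := by
  rw [RD]
  split_ifs with huv hK
  · rfl
  · rw [SimpleGraph.dist_eq_one_iff_adj.mpr (adj_iff.mpr ⟨huv, hK⟩)]; norm_num
  · have hc₀ : (⟨0, by omega⟩ : Fin n) ∈ clique n α := mem_clique.mpr (by simp; omega)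
    have hu : u ≠ ⟨0, by omega⟩ := fun h => hK (Or.inl (h ▸ hc₀))
    have hv : ⟨0, by omega⟩ ≠ v := fun h => hK (Or.inr (h ▸ hc₀))
    rw [SimpleGraph.dist_eq_two_of_adj_of_adj (adj_iff.mpr ⟨hu, Or.inr hc₀⟩)
      (adj_iff.mpr ⟨hv, Or.inl hc₀⟩) huv fun h => hK (adj_iff.mp h).2]
    norm_num

theorem RDL_mulVec_apply_eq (hαn : α < n) (x : Fin n → ℝ) (u : Fin n) :
    (RDL (completeSplitGraph n α) *ᵥ x) u =
      ∑ v, (x u - x v) - if u ∈ clique n α then 0 else (∑ v ∈ (clique n α)ᶜ, (x u - x v)) / 2 := by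
  have hterm : ∀ v, RD (completeSplitGraph n α) u v * (x u - x v) = (x u - x v) -
      if u ∈ clique n α then 0 else if v ∈ (clique n α)ᶜ then (x u - x v) / 2 else 0 := by
    intro v
    rw [RD_apply hαn]
    split_ifs <;> simp_all; ring
  rw [RDL_mulVec_apply, sum_congr rfl fun v _ => hterm v, sum_sub_distrib]
  split_ifs with hu
  · simp
  · rw [sum_ite_mem, univ_inter, sum_div]

theorem RDL_mulVec_of_sum_eq_zero_of_constant_off_clique (hαn : α < n) {x : Fin n → ℝ}
    (hsum : ∑ v, x v = 0) (hconst : ∀ u ∉ clique n α, ∀ v ∉ clique n α, x u = x v) :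
    RDL (completeSplitGraph n α) *ᵥ x = (n : ℝ) • x := by
  ext u
  rw [RDL_mulVec_apply_eq hαn, sum_sub_distrib, hsum]
  split_ifs with hu
  · simp
  · rw [sum_eq_zero fun v hv => sub_eq_zero.mpr (hconst u hu v (mem_compl.mp hv))]
    simp

theorem RDL_mulVec_of_sum_eq_zero_of_zero_on_clique (hαn : α < n) {x : Fin n → ℝ}
    (hsum : ∑ v, x v = 0) (hzero : ∀ u ∈ clique n α, x u = 0) :
    RDL (completeSplitGraph n α) *ᵥ x = ((n : ℝ) - α / 2) • x := by
  have hsumS : ∑ v ∈ (clique n α)ᶜ, x v = 0 := by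
    rw [← hsum, ← sum_compl_add_sum (clique n α), sum_eq_zero hzero, add_zero]
  ext u
  rw [RDL_mulVec_apply_eq hαn, sum_sub_distrib, hsum]
  split_ifs with hu
  · simp [hzero u hu]
  · rw [sum_sub_distrib, hsumS, sum_const, sum_const, card_compl_clique hαn.le]
    simp
    ring

noncomputable def eigvec (n α : ℕ) (c₀ s₀ j : Fin n) : Fin n → ℝ :=
  if j = c₀ then 1
  else if j = s₀ then fun u => if u ∈ clique n α then (α : ℝ) else (α : ℝ) - n
  else Pi.single j 1 - Pi.single (if j ∈ clique n α then c₀ else s₀) 1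

noncomputable def eigval (n α : ℕ) (c₀ s₀ j : Fin n) : ℝ :=
  if j = c₀ then 0 else if j ∈ clique n α ∨ j = s₀ then n else n - α / 2

variable {c₀ s₀ : Fin n}

theorem sum_eigvec (hαn : α ≤ n) (j : Fin n) :
    ∑ u, eigvec n α c₀ s₀ j u = if j = c₀ then (n : ℝ) else 0 := by
  unfold eigvec
  split_ifs with h₀ h₁
  · simp
  · rw [← sum_add_sum_compl (clique n α), sum_congr rfl fun u hu => if_pos hu,
      sum_congr rfl fun u hu => if_neg (mem_compl.mp hu)]
    simp [card_clique hαn, card_compl_clique hαn, Nat.cast_sub hαn]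
    ring
  all_goals simp only [Pi.sub_apply, sum_sub_distrib]; simp

theorem sum_clique_eigvec (hαn : α ≤ n) (hc₀ : c₀ ∈ clique n α) (hs₀ : s₀ ∉ clique n α)
    (j : Fin n) :
    ∑ u ∈ clique n α, eigvec n α c₀ s₀ j u =
      if j = c₀ then ((n : ℝ) - α) else if j = s₀ then ((n : ℝ) - α) * α else 0 := by
  unfold eigvec
  split_ifs with h₀ h₁ hj
  · simp [card_clique hαn, Nat.cast_sub hαn]
  · rw [sum_congr rfl fun u hu => if_pos hu]
    simp [card_clique hαn, Nat.cast_sub hαn]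
  · simp only [Pi.sub_apply, sum_sub_distrib]; simp [hj, hc₀]
  · simp only [Pi.sub_apply, sum_sub_distrib]; simp [hj, hs₀]

theorem RDL_mulVec_eigvec (hαn : α < n) (hc₀ : c₀ ∈ clique n α) (hs₀ : s₀ ∉ clique n α)
    (j : Fin n) :
    RDL (completeSplitGraph n α) *ᵥ eigvec n α c₀ s₀ j =
      eigval n α c₀ s₀ j • eigvec n α c₀ s₀ j := by
  by_cases h₀ : j = c₀
  · simp [eigvec, eigval, h₀, RDL_mulVec_one]
  have hsum : ∑ u, eigvec n α c₀ s₀ j u = 0 := by rw [sum_eigvec hαn.le, if_neg h₀]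
  rw [eigval, if_neg h₀]
  split_ifs with hK
  · refine RDL_mulVec_of_sum_eq_zero_of_constant_off_clique hαn hsum fun u hu v hv => ?_
    rcases hK with hj | rfl
    · have hjs : j ≠ s₀ := fun h => hs₀ (h ▸ hj)
      have hne : ∀ w ∉ clique n α, w ≠ j ∧ w ≠ c₀ := fun w hw =>
        ⟨fun h => hw (h ▸ hj), fun h => hw (h ▸ hc₀)⟩
      simp [eigvec, h₀, hjs, hj, hne u hu, hne v hv]
    · simp [eigvec, h₀, hu, hv]
  · rw [not_or] at hK
    refine RDL_mulVec_of_sum_eq_zero_of_zero_on_clique hαn hsum fun u hu => ?_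
    have hu₁ : u ≠ j := fun h => hK.1 (h ▸ hu)
    have hu₂ : u ≠ s₀ := fun h => hs₀ (h ▸ hu)
    simp [eigvec, h₀, hK.1, hK.2, hu₁, hu₂]

theorem linearIndependent_eigvec (hαn : α < n) (hc₀ : c₀ ∈ clique n α)
    (hs₀ : s₀ ∉ clique n α) : LinearIndependent ℝ (eigvec n α c₀ s₀) := by
  rw [Fintype.linearIndependent_iff]
  intro g hg
  have hsums : ∀ s : Finset (Fin n), ∑ j, g j * ∑ u ∈ s, eigvec n α c₀ s₀ j u = 0 := by
    intro s
    simpa [Finset.sum_apply, mul_sum, sum_comm (s := s)] using congrArg (fun y => ∑ u ∈ s, y u) hg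
  have hne : s₀ ≠ c₀ := fun h => hs₀ (h ▸ hc₀)
  have hk : (0 : ℝ) < n - α := by
    have : (α : ℝ) < n := by exact_mod_cast hαn
    linarith
  have hα : (0 : ℝ) < α := by
    have : 0 < #(clique n α)ᶜ := card_pos.mpr ⟨s₀, mem_compl.mpr hs₀⟩
    rw [card_compl_clique hαn.le] at this
    exact_mod_cast this
  -- Summing over all vertices, then over the clique, isolates the coefficients of `1` and of
  -- `α 𝟙_K - (n - α) 𝟙_S`; every other eigenvector is a difference of two basis vectors.
  have hgc : g c₀ = 0 := by
    have := hsums univ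
    simp only [sum_eigvec hαn.le, mul_ite, mul_zero, sum_ite_eq', if_pos (mem_univ _)]
      at this
    exact (mul_eq_zero.mp this).resolve_right (ne_of_gt (by linarith))
  have hgs : g s₀ = 0 := by
    have := hsums (clique n α)
    rw [sum_eq_single s₀ (fun j _ hj => by
        rw [sum_clique_eigvec hαn.le hc₀ hs₀]; split_ifs with h <;> simp [h, hgc])
      (by simp), sum_clique_eigvec hαn.le hc₀ hs₀, if_neg hne, if_pos rfl] at this
    exact (mul_eq_zero.mp this).resolve_right (by positivity)
  intro i
  by_cases hi₀ : i = c₀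
  · exact hi₀ ▸ hgc
  by_cases hi₁ : i = s₀
  · exact hi₁ ▸ hgs
  have hanchor : ∀ j, (if j ∈ clique n α then c₀ else s₀) ≠ i := fun j => by
    split_ifs <;> simp [Ne.symm hi₀, Ne.symm hi₁]
  have := congrFun hg i
  rw [Finset.sum_apply, sum_eq_single i (fun j _ hj => ?_) (by simp)] at this
  · simpa [eigvec, hi₀, hi₁, hanchor] using this
  · by_cases hj₀ : j = c₀
    · simp [hj₀, hgc]
    by_cases hj₁ : j = s₀
    · simp [hj₁, hgs]
    simp [eigvec, hj₀, hj₁, Ne.symm hj, hanchor]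

theorem map_eigval_univ (hαn : α ≤ n) (hc₀ : c₀ ∈ clique n α) (hs₀ : s₀ ∉ clique n α) :
    univ.val.map (eigval n α c₀ s₀) =
      0 ::ₘ Multiset.replicate (n - α) (n : ℝ) + Multiset.replicate (α - 1) ((n : ℝ) - α / 2) := by
  have hsplit : (univ : Finset (Fin n)).val = (clique n α).val + (clique n α)ᶜ.val := by
    rw [← disjUnion_val (clique n α) _ disjoint_compl_right, disjUnion_eq_union, union_compl]
  have hne : s₀ ≠ c₀ := fun h => hs₀ (h ▸ hc₀)
  have hK : (clique n α).val.map (eigval n α c₀ s₀) =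
      0 ::ₘ Multiset.replicate (n - α - 1) (n : ℝ) := by
    rw [← Multiset.cons_erase (mem_val.mpr hc₀), Multiset.map_cons, ← erase_val,
      Multiset.map_congr (g := fun _ => (n : ℝ)) rfl fun j hj => ?_, Multiset.map_const',
      card_val, card_erase_of_mem hc₀, card_clique hαn]
    · simp [eigval]
    · obtain ⟨hj, hjK⟩ := mem_erase.mp (mem_val.mp hj)
      simp [eigval, hj, hjK]
  have hS : (clique n α)ᶜ.val.map (eigval n α c₀ s₀) =
      (n : ℝ) ::ₘ Multiset.replicate (α - 1) ((n : ℝ) - α / 2) := by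
    rw [← Multiset.cons_erase (mem_val.mpr (mem_compl.mpr hs₀)), Multiset.map_cons, ← erase_val,
      Multiset.map_congr (g := fun _ => (n : ℝ) - α / 2) rfl fun j hj => ?_,
      Multiset.map_const', card_val, card_erase_of_mem (mem_compl.mpr hs₀), card_compl_clique hαn]
    · simp [eigval, hne]
    · obtain ⟨hj, hjK⟩ := mem_erase.mp (mem_val.mp hj)
      have hj₀ : j ≠ c₀ := fun h => mem_compl.mp hjK (h ▸ hc₀)
      simp [eigval, hj, hj₀, mem_compl.mp hjK]
  rw [hsplit, Multiset.map_add, hK, hS, Multiset.cons_add, Multiset.add_cons,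
    ← Multiset.cons_add, ← Multiset.replicate_succ, Nat.sub_add_cancel, Multiset.cons_add]
  rw [← card_clique hαn]
  exact card_pos.mpr ⟨c₀, hc₀⟩

end completeSplitGraph

theorem stmt14 (n α : ℕ) (hα : 1 ≤ α) (hαn : α < n) :
    (RDL (completeSplitGraph n α)).charpoly.roots =
      0 ::ₘ Multiset.replicate (n - α) (n : ℝ) +
        Multiset.replicate (α - 1) ((n : ℝ) - (α : ℝ) / 2) := by
  have hc₀ : (⟨0, by omega⟩ : Fin n) ∈ completeSplitGraph.clique n α :=
    completeSplitGraph.mem_clique.mpr (by simp; omega)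
  have hs₀ : (⟨n - α, by omega⟩ : Fin n) ∉ completeSplitGraph.clique n α := by
    simp [completeSplitGraph.mem_clique]
  rw [Matrix.roots_charpoly_of_linearIndependent_eigenvectors
    (completeSplitGraph.linearIndependent_eigvec hαn hc₀ hs₀)
    (completeSplitGraph.RDL_mulVec_eigvec hαn hc₀ hs₀),
    completeSplitGraph.map_eigval_univ hαn.le hc₀ hs₀]
end
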